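/- arXiv:2204.07950 — 3 statements merged into one kernel-verified Lean document; each statement's English description precedes it below -/
import Mathlib

section
/- Let R be a finite field equipped with the discrete topology, Γ a set with at least two elements, φ: Γ → Γ a map, and w ∈ R^Γ a weight vector. Then the dynamical system (R^Γ, σ_{φ,w}) is strongly sensitive if and only if there exists a non-quasi-periodic point θ ∈ Γ of φ such that w_{φ^n(θ)} ≠ 0 for all n ≥ 0. -/
open Function Set

namespace WGShift

variable {Γ R : Type*}

/-- The basic entourage `O_M` determined by a set of coordinates `M ⊆ Γ`. -/
def shiftOM (M : Set Γ) : Set ((Γ → R) × (Γ → R)) :=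
  {p | ∀ α ∈ M, p.1 α = p.2 α}

/-- Entourages of the product uniformity on `Γ → R` (with `R` discrete):
exactly the sets containing some `O_M` with `M` finite. -/
def IsEntourage (O : Set ((Γ → R) × (Γ → R))) : Prop :=
  ∃ M : Set Γ, M.Finite ∧ shiftOM M ⊆ O

/-- The weighted generalized shift `σ_{φ,w}`. -/
def wshift [Mul R] (φ : Γ → Γ) (w : Γ → R) : (Γ → R) → (Γ → R) :=
  fun x α => w α * x (φ α)

/-- `α` is quasi-periodic under `φ` if `φ^i α = φ^j α` for some `i > j ≥ 1`. -/
def IsQuasiPeriodic (φ : Γ → Γ) (α : Γ) : Prop :=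
  ∃ i j : ℕ, 1 ≤ j ∧ j < i ∧ φ^[i] α = φ^[j] α

/-- Sensitivity of `(R^Γ, f)` with respect to the product uniformity. -/
def Sensitive [TopologicalSpace R] (f : (Γ → R) → (Γ → R)) : Prop :=
  ∃ O : Set ((Γ → R) × (Γ → R)), IsEntourage O ∧
    ∀ x : Γ → R, ∀ U : Set (Γ → R), IsOpen U → x ∈ U →
      ∃ y ∈ U, ∃ n : ℕ, (f^[n] x, f^[n] y) ∉ O

/-- Strong sensitivity of `(R^Γ, f)` with respect to the product uniformity. -/
def StronglySensitive [TopologicalSpace R] (f : (Γ → R) → (Γ → R)) : Prop :=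
  ∃ O : Set ((Γ → R) × (Γ → R)), IsEntourage O ∧
    ∀ x : Γ → R, ∀ U : Set (Γ → R), IsOpen U → x ∈ U →
      ∃ y ∈ U, ∃ N : ℕ, ∀ n ≥ N, (f^[n] x, f^[n] y) ∉ O

/-- `x, y` are proximal for `f`. -/
def ProximalPair (f : (Γ → R) → (Γ → R)) (x y : Γ → R) : Prop :=
  ∀ O : Set ((Γ → R) × (Γ → R)), IsEntourage O →
    ∃ n ≥ 1, (f^[n] x, f^[n] y) ∈ O

/-- `x, y` are asymptotic for `f`. -/
def AsymptoticPair (f : (Γ → R) → (Γ → R)) (x y : Γ → R) : Prop :=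
  ∀ O : Set ((Γ → R) × (Γ → R)), IsEntourage O →
    ∃ N ≥ 1, ∀ n ≥ N, (f^[n] x, f^[n] y) ∈ O

/-- A scrambled pair: proximal but not asymptotic. -/
def ScrambledPair (f : (Γ → R) → (Γ → R)) (x y : Γ → R) : Prop :=
  ProximalPair f x y ∧ ¬ AsymptoticPair f x y

/-- Li–Yorke chaos: existence of an uncountable scrambled set. -/
def LiYorkeChaotic (f : (Γ → R) → (Γ → R)) : Prop :=
  ∃ A : Set (Γ → R), ¬ A.Countable ∧
    ∀ x ∈ A, ∀ y ∈ A, x ≠ y → ScrambledPair f x y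

/-- Topological transitivity of `(R^Γ, f)`. -/
def TopTransitive [TopologicalSpace R] (f : (Γ → R) → (Γ → R)) : Prop :=
  ∀ U V : Set (Γ → R), IsOpen U → IsOpen V → U.Nonempty → V.Nonempty →
    ∃ n ≥ 1, (f^[n] '' U ∩ V).Nonempty

/-- The set of periodic points of `f`. -/
def perPoints (f : (Γ → R) → (Γ → R)) : Set (Γ → R) :=
  {x | ∃ n ≥ 1, f^[n] x = x}

/-- Devaney chaos: sensitive, topologically transitive, dense periodic points. -/
def DevaneyChaotic [TopologicalSpace R] (f : (Γ → R) → (Γ → R)) : Prop :=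
  Sensitive f ∧ TopTransitive f ∧ Dense (perPoints f)

open Classical in
/-- The point `x^A ∈ R^Γ` built from `A ⊆ ℕ` along the orbit of `ν`. -/
noncomputable def xA [Zero R] [One R] (φ : Γ → Γ) (ν : Γ) (A : Set ℕ) : Γ → R :=
  fun α => if ∃ p : ℕ, p ∈ A ∧ α = φ^[p * (p + 1) / 2] ν then 1 else 0

end WGShift

open WGShift

lemma wshift_iterate {Γ R : Type*} [CommMonoid R] (φ : Γ → Γ) (w : Γ → R)
    (x : Γ → R) (n : ℕ) (α : Γ) :
    (wshift φ w)^[n] x α = (∏ k ∈ Finset.range n, w (φ^[k] α)) * x (φ^[n] α) := by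
  induction n generalizing α with
  | zero => simp
  | succ n ih =>
    rw [Function.iterate_succ_apply']
    show w α * (wshift φ w)^[n] x (φ α) = _
    rw [ih (φ α)]
    have h1 : ∀ k : ℕ, φ^[k] (φ α) = φ^[k + 1] α := by
      intro k; rw [← Function.iterate_succ_apply]
    have h2 : φ^[n] (φ α) = φ^[n + 1] α := (Function.iterate_succ_apply φ n α).symm
    have h3 : (∏ k ∈ Finset.range n, w (φ^[k] (φ α))) = ∏ k ∈ Finset.range n, w (φ^[k + 1] α) :=
      Finset.prod_congr rfl (fun k _ => by rw [← Function.iterate_succ_apply])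
    rw [h3, h2, Finset.prod_range_succ', Function.iterate_zero_apply, ← mul_assoc,
      mul_comm (w α)]

lemma orbit_finite {Γ : Type*} (φ : Γ → Γ) (α : Γ) (h : IsQuasiPeriodic φ α) :
    (Set.range fun n => φ^[n] α).Finite := by
  obtain ⟨i, j, hj1, hji, hij⟩ := h
  apply Set.Finite.subset (Set.finite_range (fun m : Fin i => φ^[(m : ℕ)] α))
  rintro _ ⟨n, rfl⟩
  suffices h : ∃ m, m < i ∧ φ^[m] α = φ^[n] α by
    obtain ⟨m, hm, he⟩ := h
    exact ⟨⟨m, hm⟩, he⟩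
  induction n using Nat.strong_induction_on with
  | _ n ih =>
    by_cases h : n < i
    · exact ⟨n, h, rfl⟩
    · push_neg at h
      have key : φ^[n] α = φ^[n - i + j] α := by
        calc φ^[n] α = φ^[n - i] (φ^[i] α) := by
              rw [← Function.iterate_add_apply]; congr 1; omega
        _ = φ^[n - i] (φ^[j] α) := by rw [hij]
        _ = φ^[n - i + j] α := by rw [← Function.iterate_add_apply]
      obtain ⟨m, hm, he⟩ := ih (n - i + j) (by omega)
      exact ⟨m, hm, he.trans key.symm⟩

lemma orbit_injective {Γ : Type*} {φ : Γ → Γ} {α : Γ} (h : ¬ IsQuasiPeriodic φ α) :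
    Function.Injective (fun n => φ^[n] α) := by
  intro a b hab
  simp only at hab
  by_contra hne
  rcases Nat.lt_or_ge a b with hlt | hge
  · exact h ⟨b + 1, a + 1, by omega, by omega, by
      rw [Function.iterate_succ_apply', Function.iterate_succ_apply', hab]⟩
  · have hlt : b < a := by omega
    exact h ⟨a + 1, b + 1, by omega, by omega, by
      rw [Function.iterate_succ_apply', Function.iterate_succ_apply', hab]⟩

lemma exists_cylinder {Γ R : Type*} [TopologicalSpace R] [DiscreteTopology R]
    {U : Set (Γ → R)} (hU : IsOpen U) {x : Γ → R} (hx : x ∈ U) :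
    ∃ M : Set Γ, M.Finite ∧ {y : Γ → R | ∀ α ∈ M, y α = x α} ⊆ U := by
  rw [isOpen_pi_iff] at hU
  obtain ⟨I, u, h1, h2⟩ := hU x hx
  refine ⟨↑I, I.finite_toSet, fun y hy => h2 ?_⟩
  intro a ha
  rw [hy a ha]
  exact (h1 a ha).2

theorem stmt4 {R Γ : Type*} [Field R] [Fintype R]
    [TopologicalSpace R] [DiscreteTopology R] [Nontrivial Γ]
    (φ : Γ → Γ) (w : Γ → R) :
    StronglySensitive (wshift φ w) ↔
      ∃ θ : Γ, ¬ IsQuasiPeriodic φ θ ∧ ∀ n : ℕ, w (φ^[n] θ) ≠ 0 := by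
  classical
  constructor
  · rintro ⟨O, ⟨M, hMfin, hMO⟩, hsens⟩
    by_contra hcon
    push_neg at hcon
    set S : Set Γ := ⋃ α ∈ {a ∈ M | IsQuasiPeriodic φ a}, Set.range (fun n => φ^[n] α) with hS
    have hSfin : S.Finite :=
      Set.Finite.biUnion (hMfin.subset (Set.sep_subset _ _))
        (fun α hα => orbit_finite φ α hα.2)
    set U : Set (Γ → R) := {y | ∀ β ∈ S, y β = 0} with hUdef
    have hUopen : IsOpen U := by
      have hEq : U = ⋂ β ∈ S, (fun y : Γ → R => y β) ⁻¹' {0} := by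
        ext y
        simp [hUdef, Set.mem_iInter]
      rw [hEq]
      exact hSfin.isOpen_biInter
        (fun β _ => (continuous_apply β).isOpen_preimage _ (isOpen_discrete _))
    have hx0 : (0 : Γ → R) ∈ U := fun β _ => rfl
    obtain ⟨y, hyU, N, hN⟩ := hsens 0 U hUopen hx0
    set g : Γ → ℕ := fun α => if h : ∃ k, w (φ^[k] α) = 0 then Nat.find h else 0 with hg
    set n : ℕ := N + hMfin.toFinset.sup g + 1 with hn
    refine hN n (by omega) (hMO ?_)
    intro α hα
    show (wshift φ w)^[n] 0 α = (wshift φ w)^[n] y α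
    rw [wshift_iterate, wshift_iterate]
    simp only [Pi.zero_apply, mul_zero]
    by_cases hqp : IsQuasiPeriodic φ α
    · have hmem : φ^[n] α ∈ S := Set.mem_biUnion ⟨hα, hqp⟩ ⟨n, rfl⟩
      rw [hyU _ hmem, mul_zero]
    · obtain ⟨k, hk⟩ := hcon α hqp
      have hex : ∃ k, w (φ^[k] α) = 0 := ⟨k, hk⟩
      have hgα : g α = Nat.find hex := dif_pos hex
      have hlt : g α < n := by
        have hle : g α ≤ hMfin.toFinset.sup g :=
          Finset.le_sup (hMfin.mem_toFinset.mpr hα)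
        omega
      rw [Finset.prod_eq_zero (Finset.mem_range.mpr hlt)
        (by rw [hgα]; exact Nat.find_spec hex), zero_mul]
  · rintro ⟨θ, hθ, hw⟩
    refine ⟨shiftOM {θ}, ⟨{θ}, Set.finite_singleton θ, subset_rfl⟩, ?_⟩
    intro x U hU hx
    obtain ⟨M, hMfin, hMsub⟩ := exists_cylinder hU hx
    have hinj := orbit_injective hθ
    have hfin : {n : ℕ | φ^[n] θ ∈ M}.Finite := by
      have := hMfin.preimage (f := fun n : ℕ => φ^[n] θ) hinj.injOn
      exact this
    obtain ⟨N, hNub⟩ := hfin.bddAbove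
    set y : Γ → R := fun α => if ∃ n, N + 1 ≤ n ∧ α = φ^[n] θ then x α + 1 else x α with hy
    refine ⟨y, hMsub ?_, N + 1, ?_⟩
    · intro α hα
      simp only [hy]
      rw [if_neg]
      rintro ⟨n, hn, rfl⟩
      have hle : n ≤ N := hNub hα
      omega
    · intro n hn hmem
      have h1 : y (φ^[n] θ) = x (φ^[n] θ) + 1 := by
        simp only [hy]
        rw [if_pos ⟨n, hn, rfl⟩]
      have heq := hmem θ (Set.mem_singleton θ)
      simp only at heq
      rw [wshift_iterate, wshift_iterate, h1] at heq
      have hc : (∏ k ∈ Finset.range n, w (φ^[k] θ)) ≠ 0 :=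
        Finset.prod_ne_zero_iff.mpr (fun k _ => hw k)
      have := mul_left_cancel₀ hc heq
      exact one_ne_zero (left_eq_add.mp this)
end

section
/- Let R be a finite field equipped with the discrete topology, Γ a set with at least two elements, φ: Γ → Γ a map, and w ∈ R^Γ a weight vector. If for every α ∈ Γ either α is quasi-periodic under φ, or α is non-quasi-periodic under φ and there exists n ≥ 0 with w_{φ^n(α)} = 0, then Prox(σ_{φ,w}) = Asym(σ_{φ,w}), i.e. every proximal pair for σ_{φ,w} is asymptotic. -/
open Function Set

open WGShift


section Aux

variable {Γ R : Type*}

lemma wshift_iter [CommRing R] (φ : Γ → Γ) (w : Γ → R) (x : Γ → R) (n : ℕ) (α : Γ) :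
    (wshift φ w)^[n] x α = (∏ k ∈ Finset.range n, w (φ^[k] α)) * x (φ^[n] α) := by
  induction n generalizing α with
  | zero => simp
  | succ n ih =>
    rw [Function.iterate_succ_apply']
    show w α * ((wshift φ w)^[n] x) (φ α) = _
    rw [ih (φ α), Finset.prod_range_succ']
    simp only [← Function.iterate_succ_apply φ]
    simp only [Nat.succ_eq_add_one, Function.iterate_zero_apply]
    ring

lemma key_coord [Field R] (φ : Γ → Γ) (w : Γ → R)
    (h : ∀ α : Γ, IsQuasiPeriodic φ α ∨
      (¬ IsQuasiPeriodic φ α ∧ ∃ n : ℕ, w (φ^[n] α) = 0))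
    (x y : Γ → R) (hprox : ProximalPair (wshift φ w) x y) (α : Γ) :
    ∃ N : ℕ, 1 ≤ N ∧ ∀ n ≥ N, (wshift φ w)^[n] x α = (wshift φ w)^[n] y α := by
  rcases h α with ⟨i, j, hj1, hji, hper⟩ | ⟨-, n₀, hw0⟩
  · -- quasi-periodic case
    set p : ℕ := i - j with hp
    have hp1 : 1 ≤ p := by omega
    set M : Set Γ := (fun m => φ^[m] α) '' Set.Iio (j + p) with hM
    have hMfin : M.Finite := (Set.finite_Iio _).image _
    obtain ⟨n, hn1, hnO⟩ := hprox (shiftOM M) ⟨M, hMfin, subset_rfl⟩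
    have base : ∀ m < j + p,
        (wshift φ w)^[m + n] x α = (wshift φ w)^[m + n] y α := by
      intro m hm
      rw [Function.iterate_add_apply, Function.iterate_add_apply]
      have hmem : φ^[m] α ∈ M := ⟨m, hm, rfl⟩
      have hv : ((wshift φ w)^[n] x) (φ^[m] α) = ((wshift φ w)^[n] y) (φ^[m] α) :=
        hnO _ hmem
      rw [wshift_iter φ w ((wshift φ w)^[n] x) m α,
        wshift_iter φ w ((wshift φ w)^[n] y) m α, hv]
    have per : ∀ m, j ≤ m → φ^[m + p] α = φ^[m] α := by
      intro m hm
      have h1 : m + p = (m - j) + i := by omega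
      have h2 : m = (m - j) + j := by omega
      rw [h1, Function.iterate_add_apply, hper, ← Function.iterate_add_apply, ← h2]
    have step : ∀ m, j ≤ m →
        (wshift φ w)^[m] x α = (wshift φ w)^[m] y α →
        (wshift φ w)^[m + p] x α = (wshift φ w)^[m + p] y α := by
      intro m hm heq
      rw [wshift_iter, wshift_iter, per m hm, Finset.prod_range_add]
      rw [wshift_iter, wshift_iter] at heq
      linear_combination (∏ k ∈ Finset.range p, w (φ^[m + k] α)) * heq
    refine ⟨n + j, by omega, ?_⟩
    intro n' hn'
    have main : ∀ k : ℕ, (wshift φ w)^[n + j + k] x α = (wshift φ w)^[n + j + k] y α := by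
      intro k
      induction k using Nat.strong_induction_on with
      | _ k ih =>
        rcases lt_or_ge k p with hk | hk
        · have := base (j + k) (by omega)
          have e : j + k + n = n + j + k := by omega
          rwa [e] at this
        · have := step (n + j + (k - p)) (by omega) (ih (k - p) (by omega))
          have e : n + j + (k - p) + p = n + j + k := by omega
          rwa [e] at this
    have e : n' = n + j + (n' - (n + j)) := by omega
    rw [e]; exact main _
  · -- zero weight case
    refine ⟨n₀ + 1, by omega, ?_⟩
    intro n hn
    have hz : ∏ k ∈ Finset.range n, w (φ^[k] α) = 0 :=
      Finset.prod_eq_zero (Finset.mem_range.2 (by omega)) hw0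
    rw [wshift_iter, wshift_iter, hz, zero_mul, zero_mul]

end Aux

theorem stmt6 {R Γ : Type*} [Field R] [Fintype R]
    [TopologicalSpace R] [DiscreteTopology R] [Nontrivial Γ]
    (φ : Γ → Γ) (w : Γ → R)
    (h : ∀ α : Γ, IsQuasiPeriodic φ α ∨
      (¬ IsQuasiPeriodic φ α ∧ ∃ n : ℕ, w (φ^[n] α) = 0)) :
    ∀ x y : Γ → R, ProximalPair (wshift φ w) x y ↔ AsymptoticPair (wshift φ w) x y := by
  intro x y
  constructor
  · intro hprox O hO
    obtain ⟨M, hMfin, hMO⟩ := hO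
    choose N hN1 hN using fun α => key_coord φ w h x y hprox α
    refine ⟨hMfin.toFinset.sup N + 1, by omega, ?_⟩
    intro n hn
    apply hMO
    intro α hα
    exact hN α n (by
      have : N α ≤ hMfin.toFinset.sup N :=
        Finset.le_sup (hMfin.mem_toFinset.2 hα)
      omega)
  · intro hasym O hO
    obtain ⟨Nn, hN1, hall⟩ := hasym O hO
    exact ⟨Nn, hN1, hall Nn le_rfl⟩
end

section
/- Let R be a finite field equipped with the discrete topology, Γ a set with at least two elements, φ: Γ → Γ a map, and w ∈ R^Γ a weight vector. Then the dynamical system (R^Γ, σ_{φ,w}) is Devaney chaotic if and only if φ is injective, φ has no periodic points, and w_α ≠ 0 for every α ∈ Γ. -/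
open Function Set

/-!
Since `σ_{φ,w}^n = σ_{φ^n, w⁽ⁿ⁾}` with `w⁽ⁿ⁾_α = ∏_{k<n} w_{φ^k α}`, everything comes down to
prescribing finitely many coordinates. Transitivity alone forces the three conditions: a zero
weight `w_β` makes coordinate `β` vanish after one step, a collision `φ a = φ b` prevents
prescribing `a` and `b` independently, and a periodic orbit on which a point vanishes stays
zero. Conversely, if `φ` is injective without periodic points, then for every finite `F` the sets
`φ^m(F)` eventually avoid `F`. Coordinates on `F` and on `φ^n(F)` can then be prescribed
independently, which gives sensitivity and transitivity; and a `σ^n`-fixed point with given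
values on `F` is obtained by transporting those values along the grand orbits of `φ^n` through
`F` with the nonvanishing weight cocycle.
-/

open Filter

namespace WGShift

variable {Γ R : Type*}

@[simp]
theorem wshift_apply [Mul R] (φ : Γ → Γ) (w : Γ → R) (x : Γ → R) (α : Γ) :
    wshift φ w x α = w α * x (φ α) := rfl

section Cocycle

variable [CommMonoid R] (φ : Γ → Γ) (w : Γ → R)

def wprod (n : ℕ) (α : Γ) : R := ∏ k ∈ Finset.range n, w (φ^[k] α)

theorem wprod_zero (α : Γ) : wprod φ w 0 α = 1 := Finset.prod_range_zero _

theorem wprod_succ' (n : ℕ) (α : Γ) : wprod φ w (n + 1) α = w α * wprod φ w n (φ α) := by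
  simp only [wprod, Finset.prod_range_succ', iterate_succ_apply, iterate_zero_apply, mul_comm]

theorem wprod_add (m n : ℕ) (α : Γ) :
    wprod φ w (m + n) α = wprod φ w m α * wprod φ w n (φ^[m] α) := by
  rw [wprod, wprod, wprod, Finset.prod_range_add]
  simp only [add_comm m, iterate_add_apply]

theorem wshift_iterate (n : ℕ) : (wshift φ w)^[n] = wshift φ^[n] (wprod φ w n) := by
  induction n with
  | zero => funext x α; simp [wprod_zero]
  | succ n ih =>
    funext x α
    rw [iterate_succ_apply', ih]
    simp only [wshift_apply, wprod_succ', iterate_succ_apply, mul_assoc]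

theorem wprod_mul_wprod_eq {α γ : Γ} {i j i' j' : ℕ} (h : φ^[i] α = φ^[j] γ)
    (h' : φ^[i'] α = φ^[j'] γ) (hij : i + j' = i' + j) :
    wprod φ w i α * wprod φ w j' γ = wprod φ w i' α * wprod φ w j γ := by
  rcases le_total i i' with hle | hle
  · obtain ⟨t, rfl⟩ := Nat.exists_eq_add_of_le hle
    obtain rfl : j' = j + t := by omega
    rw [wprod_add, wprod_add, h]; ac_rfl
  · obtain ⟨t, rfl⟩ := Nat.exists_eq_add_of_le hle
    obtain rfl : j = j' + t := by omega
    rw [wprod_add, wprod_add, h']; ac_rfl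

end Cocycle

theorem wprod_ne_zero [CommMonoidWithZero R] [NoZeroDivisors R] [Nontrivial R] (φ : Γ → Γ)
    {w : Γ → R} (hw : ∀ α, w α ≠ 0) (n : ℕ) (α : Γ) : wprod φ w n α ≠ 0 :=
  Finset.prod_ne_zero_iff.2 fun _ _ => hw _

section Orbits

variable {φ : Γ → Γ}

theorem eq_and_eq_of_iterate_eq_iterate (hφ : Injective φ) {F : Set Γ}
    (hF : ∀ γ ∈ F, ∀ δ ∈ F, ∀ k, 0 < k → φ^[k] γ ≠ δ) {γ δ : Γ} (hγ : γ ∈ F) (hδ : δ ∈ F)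
    {p q : ℕ} (h : φ^[p] γ = φ^[q] δ) : γ = δ ∧ p = q := by
  wlog hpq : p ≤ q generalizing γ δ p q
  · exact (this hδ hγ h.symm (le_of_not_ge hpq)).imp Eq.symm Eq.symm
  obtain ⟨d, rfl⟩ := Nat.exists_eq_add_of_le hpq
  have hγd : γ = φ^[d] δ := hφ.iterate p (by rwa [iterate_add_apply] at h)
  rcases Nat.eq_zero_or_pos d with rfl | hd
  · exact ⟨hγd, rfl⟩
  · exact absurd hγd.symm (hF δ hδ γ hγ d hd)

theorem eventually_iterate_ne (hφ : Injective φ) (hper : ∀ α : Γ, ∀ n : ℕ, 1 ≤ n → φ^[n] α ≠ α)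
    (γ δ : Γ) : ∀ᶠ m in atTop, φ^[m] γ ≠ δ := by
  by_cases h : ∃ m₀, φ^[m₀] γ = δ
  · obtain ⟨m₀, rfl⟩ := h
    have hγ : ∀ a ∈ ({γ} : Set Γ), ∀ b ∈ ({γ} : Set Γ), ∀ k, 0 < k → φ^[k] a ≠ b := by
      rintro _ rfl _ rfl k hk
      exact hper _ k hk
    filter_upwards [eventually_gt_atTop m₀] with m hm heq
    exact hm.ne' (eq_and_eq_of_iterate_eq_iterate hφ hγ rfl rfl heq).2
  · simp only [not_exists] at h
    exact Eventually.of_forall h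

theorem eventually_forall_iterate_notMem (hφ : Injective φ)
    (hper : ∀ α : Γ, ∀ n : ℕ, 1 ≤ n → φ^[n] α ≠ α) (F G : Finset Γ) :
    ∀ᶠ m in atTop, ∀ γ ∈ F, φ^[m] γ ∉ G := by
  simp only [eventually_all_finset]
  intro γ _
  filter_upwards [(eventually_all_finset G).2 fun δ _ => eventually_iterate_ne hφ hper γ δ]
    with m hm hmem using hm _ hmem rfl

end Orbits

theorem isOpen_setOf_apply_eq [TopologicalSpace R] [DiscreteTopology R] (β : Γ) (c : R) :
    IsOpen {y : Γ → R | y β = c} :=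
  (continuous_apply (A := fun _ : Γ => R) β).isOpen_preimage {c} (isOpen_discrete _)

theorem exists_finset_forall_apply_eq_subset [TopologicalSpace R] {U : Set (Γ → R)}
    (hU : IsOpen U) {x : Γ → R} (hx : x ∈ U) :
    ∃ F : Finset Γ, {y : Γ → R | ∀ α ∈ F, y α = x α} ⊆ U := by
  obtain ⟨F, u, hu, hFu⟩ := isOpen_pi_iff.1 hU x hx
  exact ⟨F, fun y hy => hFu fun α hα => (hy α hα).symm ▸ (hu α hα).2⟩

section Necessity

variable [CommMonoidWithZero R] [Nontrivial R] [TopologicalSpace R] [DiscreteTopology R]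
  {φ : Γ → Γ} {w : Γ → R}

theorem ne_zero_of_topTransitive (hT : TopTransitive (wshift φ w)) (β : Γ) : w β ≠ 0 := by
  intro hβ
  obtain ⟨n, hn, _, ⟨z, -, rfl⟩, hz⟩ := hT univ {y | y β = 1} isOpen_univ
    (isOpen_setOf_apply_eq β 1) univ_nonempty ⟨1, rfl⟩
  obtain ⟨m, rfl⟩ := Nat.exists_eq_add_of_le' hn
  rw [mem_ofPred_eq, iterate_succ_apply', wshift_apply, hβ, zero_mul] at hz
  exact zero_ne_one hz

theorem injective_of_topTransitive [NoZeroDivisors R] (hT : TopTransitive (wshift φ w)) :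
    Injective φ := by
  classical
  intro a b hab
  by_contra hne
  obtain ⟨n, hn, _, ⟨z, -, rfl⟩, ha, hb⟩ := hT univ ({y | y a = 1} ∩ {y | y b = 0}) isOpen_univ
    ((isOpen_setOf_apply_eq a 1).inter (isOpen_setOf_apply_eq b 0)) univ_nonempty
    ⟨Pi.single a 1, Pi.single_eq_same a 1, Pi.single_eq_of_ne (Ne.symm hne) 1⟩
  obtain ⟨m, rfl⟩ := Nat.exists_eq_add_of_le' hn
  simp only [mem_ofPred_eq, iterate_succ_apply', wshift_apply, hab] at ha hb
  rcases mul_eq_zero.1 hb with h | h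
  · exact ne_zero_of_topTransitive hT b h
  · rw [h, mul_zero] at ha
    exact zero_ne_one ha

theorem iterate_ne_self_of_topTransitive (hT : TopTransitive (wshift φ w)) (α : Γ) (m : ℕ)
    (hm : 1 ≤ m) : φ^[m] α ≠ α := by
  intro hα
  obtain ⟨n, -, _, ⟨z, hz, rfl⟩, hzα⟩ :=
    hT (⋂ k ∈ Finset.range m, {z | z (φ^[k] α) = 0}) {y | y α = 1}
      (isOpen_biInter_finset fun k _ => isOpen_setOf_apply_eq _ 0) (isOpen_setOf_apply_eq α 1)
      ⟨0, mem_iInter₂.2 fun _ _ => rfl⟩ ⟨1, rfl⟩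
  have hzero := mem_iInter₂.1 hz (n % m) (Finset.mem_range.2 (Nat.mod_lt n hm))
  rw [mem_ofPred_eq, IsPeriodicPt.iterate_mod_apply hα] at hzero
  rw [mem_ofPred_eq, wshift_iterate, wshift_apply, hzero, mul_zero] at hzα
  exact zero_ne_one hzα

end Necessity

section Sufficiency

variable [CommGroupWithZero R]

theorem exists_wshift_eq_on {ψ : Γ → Γ} {v : Γ → R} (hψ : Injective ψ) (hv : ∀ α, v α ≠ 0)
    {F G : Set Γ} (hGF : ∀ γ ∈ G, ψ γ ∉ F) (x y : Γ → R) :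
    ∃ z : Γ → R, (∀ α ∈ F, z α = x α) ∧ ∀ γ ∈ G, wshift ψ v z γ = y γ := by
  classical
  refine ⟨fun α => if α ∈ F then x α else extend ψ (fun γ => y γ / v γ) 0 α,
    fun α hα => if_pos hα, fun γ hγ => ?_⟩
  simp only [wshift_apply, if_neg (hGF γ hγ), hψ.extend_apply]
  exact mul_div_cancel₀ (y γ) (hv γ)

/-- A fixed point `y` of `σ_{ψ,v}` must satisfy `wprod ψ v j γ * y α = wprod ψ v i α * y γ`
whenever `ψ^i α = ψ^j γ`. The hypothesis on `F` makes `γ ∈ F` and `i - j` unique, so this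
prescribes a consistent value at every `α`. -/
theorem exists_wshift_fixed_value {ψ : Γ → Γ} {v : Γ → R} (hψ : Injective ψ)
    (hv : ∀ α, v α ≠ 0) {F : Set Γ}
    (hF : ∀ γ ∈ F, ∀ δ ∈ F, ∀ k, 0 < k → ψ^[k] γ ≠ δ) (x : Γ → R) (α : Γ) :
    ∃ c : R, (∀ γ ∈ F, ∀ i j, ψ^[i] α = ψ^[j] γ → wprod ψ v j γ * c = wprod ψ v i α * x γ) ∧
      ((∀ γ ∈ F, ∀ i j, ψ^[i] α ≠ ψ^[j] γ) → c = 0) := by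
  by_cases hα : ∃ γ ∈ F, ∃ i j, ψ^[i] α = ψ^[j] γ
  · obtain ⟨γ₀, hγ₀, i₀, j₀, h₀⟩ := hα
    refine ⟨wprod ψ v i₀ α / wprod ψ v j₀ γ₀ * x γ₀, fun γ hγ i j h => ?_,
      fun h => absurd h₀ (h γ₀ hγ₀ i₀ j₀)⟩
    have hrep : ψ^[i₀ + j] γ = ψ^[i + j₀] γ₀ := by
      rw [iterate_add_apply, ← h, iterate_add_apply, ← h₀, ← iterate_add_apply,
        ← iterate_add_apply, add_comm]
    obtain ⟨rfl, hij⟩ := eq_and_eq_of_iterate_eq_iterate hψ hF hγ hγ₀ hrep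
    have hcocycle := wprod_mul_wprod_eq ψ v h h₀ (by omega)
    have hj₀ := wprod_ne_zero ψ hv j₀ γ
    field_simp
    rw [mul_comm (wprod ψ v j γ), ← hcocycle]
    ac_rfl
  · simp only [not_exists, not_and] at hα
    exact ⟨0, fun γ hγ i j h => absurd h (hα γ hγ i j), fun _ => rfl⟩

theorem exists_wshift_fixed {ψ : Γ → Γ} {v : Γ → R} (hψ : Injective ψ) (hv : ∀ α, v α ≠ 0)
    {F : Set Γ} (hF : ∀ γ ∈ F, ∀ δ ∈ F, ∀ k, 0 < k → ψ^[k] γ ≠ δ) (x : Γ → R) :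
    ∃ y : Γ → R, wshift ψ v y = y ∧ ∀ γ ∈ F, y γ = x γ := by
  choose y hy hy₀ using exists_wshift_fixed_value hψ hv hF x
  refine ⟨y, funext fun α => ?_, fun γ hγ => by simpa [wprod_zero] using hy γ γ hγ 0 0 rfl⟩
  by_cases hα : ∃ γ ∈ F, ∃ i j, ψ^[i] α = ψ^[j] γ
  · obtain ⟨γ, hγ, i, j, h⟩ := hα
    have h₁ : ψ^[i + 1] α = ψ^[j + 1] γ := by rw [iterate_succ_apply', h, iterate_succ_apply']
    have h₂ : ψ^[i] (ψ α) = ψ^[j + 1] γ := by rw [← iterate_succ_apply, h₁]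
    apply mul_left_cancel₀ (wprod_ne_zero ψ hv (j + 1) γ)
    rw [wshift_apply, mul_left_comm, hy (ψ α) γ hγ i (j + 1) h₂, hy α γ hγ (i + 1) (j + 1) h₁,
      wprod_succ', mul_assoc]
  · simp only [not_exists, not_and] at hα
    have hψα : ∀ γ ∈ F, ∀ i j, ψ^[i] (ψ α) ≠ ψ^[j] γ := fun γ hγ i j h =>
      hα γ hγ (i + 1) j (by rwa [iterate_succ_apply])
    rw [wshift_apply, hy₀ α hα, hy₀ (ψ α) hψα, mul_zero]

variable [TopologicalSpace R] {φ : Γ → Γ} {w : Γ → R}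

theorem sensitive_wshift [Nonempty Γ] (hφ : Injective φ)
    (hper : ∀ α : Γ, ∀ n : ℕ, 1 ≤ n → φ^[n] α ≠ α) (hw : ∀ α, w α ≠ 0) :
    Sensitive (wshift φ w) := by
  classical
  obtain ⟨β⟩ := ‹Nonempty Γ›
  refine ⟨shiftOM {β}, ⟨{β}, finite_singleton β, subset_rfl⟩, fun x U hU hx => ?_⟩
  obtain ⟨F, hF⟩ := exists_finset_forall_apply_eq_subset hU hx
  obtain ⟨n, hn⟩ := (eventually_forall_iterate_notMem hφ hper {β} F).exists
  obtain ⟨c, hc⟩ := exists_ne (x (φ^[n] β))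
  refine ⟨update x (φ^[n] β) c, hF fun α hα => update_of_ne ?_ _ _, n, fun hO => hc ?_⟩
  · rintro rfl
    exact hn β (Finset.mem_singleton_self β) hα
  · have hβ := hO β rfl
    simp only [wshift_iterate, wshift_apply, update_self] at hβ
    exact (mul_left_cancel₀ (wprod_ne_zero φ hw n β) hβ).symm

theorem topTransitive_wshift (hφ : Injective φ)
    (hper : ∀ α : Γ, ∀ n : ℕ, 1 ≤ n → φ^[n] α ≠ α) (hw : ∀ α, w α ≠ 0) :
    TopTransitive (wshift φ w) := by
  rintro U V hU hV ⟨x, hx⟩ ⟨y, hy⟩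
  obtain ⟨F, hF⟩ := exists_finset_forall_apply_eq_subset hU hx
  obtain ⟨G, hG⟩ := exists_finset_forall_apply_eq_subset hV hy
  obtain ⟨n, hGF, hn⟩ :=
    ((eventually_forall_iterate_notMem hφ hper G F).and (eventually_ge_atTop 1)).exists
  obtain ⟨z, hzF, hzG⟩ :=
    exists_wshift_eq_on (F := F) (G := G) (hφ.iterate n) (wprod_ne_zero φ hw n) hGF x y
  exact ⟨n, hn, _, mem_image_of_mem _ (hF hzF), hG (by rwa [wshift_iterate])⟩

theorem dense_perPoints_wshift (hφ : Injective φ)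
    (hper : ∀ α : Γ, ∀ n : ℕ, 1 ≤ n → φ^[n] α ≠ α) (hw : ∀ α, w α ≠ 0) :
    Dense (perPoints (wshift φ w)) := by
  refine dense_iff_inter_open.2 fun U hU ⟨x, hx⟩ => ?_
  obtain ⟨F, hF⟩ := exists_finset_forall_apply_eq_subset hU hx
  obtain ⟨N, hN⟩ := eventually_atTop.1 (eventually_forall_iterate_notMem hφ hper F F)
  have hFF : ∀ γ ∈ (F : Set Γ), ∀ δ ∈ (F : Set Γ), ∀ k, 0 < k → (φ^[N + 1])^[k] γ ≠ δ := by
    intro γ hγ δ hδ k hk h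
    rw [← iterate_mul] at h
    exact hN _ (by nlinarith) γ hγ (h ▸ hδ)
  obtain ⟨y, hyfix, hyF⟩ := exists_wshift_fixed (hφ.iterate _) (wprod_ne_zero φ hw _) hFF x
  exact ⟨y, hF hyF, N + 1, N.succ_pos, by rw [wshift_iterate, hyfix]⟩

end Sufficiency

end WGShift

open WGShift

theorem stmt18_general {R Γ : Type*} [Field R]
    [TopologicalSpace R] [DiscreteTopology R] [Nontrivial Γ]
    (φ : Γ → Γ) (w : Γ → R) :
    DevaneyChaotic (wshift φ w) ↔
      Function.Injective φ ∧ (∀ α : Γ, ∀ n : ℕ, 1 ≤ n → φ^[n] α ≠ α) ∧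
        ∀ α : Γ, w α ≠ 0 :=
  ⟨fun ⟨_, hT, _⟩ => ⟨injective_of_topTransitive hT, iterate_ne_self_of_topTransitive hT,
      ne_zero_of_topTransitive hT⟩,
    fun ⟨hφ, hper, hw⟩ => ⟨sensitive_wshift hφ hper hw, topTransitive_wshift hφ hper hw,
      dense_perPoints_wshift hφ hper hw⟩⟩

theorem stmt18 {R Γ : Type*} [Field R] [Fintype R]
    [TopologicalSpace R] [DiscreteTopology R] [Nontrivial Γ]
    (φ : Γ → Γ) (w : Γ → R) :
    DevaneyChaotic (wshift φ w) ↔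
      Function.Injective φ ∧ (∀ α : Γ, ∀ n : ℕ, 1 ≤ n → φ^[n] α ≠ α) ∧
        ∀ α : Γ, w α ≠ 0 :=
  stmt18_general φ w
end
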